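/- Let 𝐇 be a normalized conditional entropy and let ρ_{AB} = ∑_{x=1}^N p_x σ^x_A ⊗ τ^x_B be a separable bipartite state, where (p_x)_{x=1}^N is a probability distribution and the σ^x_A and τ^x_B are states on A and B respectively. Then 𝐇(A|B)_ρ ≥ 0. -/

import Mathlib

open Matrix Kronecker BigOperators
open scoped ENNReal ComplexOrder

noncomputable section

/-- A quantum state: a positive semidefinite matrix of trace one. -/
def IsState {α : Type} [Fintype α] (ρ : Matrix α α ℂ) : Prop :=
  ρ.PosSemidef ∧ ρ.trace = 1

/-- The Choi matrix `∑ i j, E i j ⊗ N (E i j)` of a map between matrix algebras. -/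
def choiMatrix {α β : Type} [Fintype α] [DecidableEq α] [Fintype β]
    (N : Matrix α α ℂ → Matrix β β ℂ) : Matrix (α × β) (α × β) ℂ :=
  ∑ i : α, ∑ j : α, Matrix.single i j (1 : ℂ) ⊗ₖ N (Matrix.single i j 1)

/-- A quantum channel: a linear, trace-preserving and completely positive map. -/
def IsChannel {α β : Type} [Fintype α] [DecidableEq α] [Fintype β]
    (N : Matrix α α ℂ → Matrix β β ℂ) : Prop :=
  IsLinearMap ℂ N ∧ (∀ X, (N X).trace = X.trace) ∧ (choiMatrix N).PosSemidef

/-- Partial trace over the first tensor factor. -/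
def trA {α β : Type} [Fintype α] (ρ : Matrix (α × β) (α × β) ℂ) : Matrix β β ℂ :=
  Matrix.of fun j j' => ∑ i : α, ρ (i, j) (i, j')

/-- The uniform (maximally mixed) state of dimension `n`. -/
def unif (n : ℕ) : Matrix (Fin n) (Fin n) ℂ := (n : ℂ)⁻¹ • 1

/-- The tensor extension `M ⊗ id` of a map `M` acting on the first factor. -/
def tensorIdRight {a a' : ℕ} (b : ℕ)
    (M : Matrix (Fin a) (Fin a) ℂ → Matrix (Fin a') (Fin a') ℂ)
    (X : Matrix (Fin a × Fin b) (Fin a × Fin b) ℂ) :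
    Matrix (Fin a' × Fin b) (Fin a' × Fin b) ℂ :=
  Matrix.of fun p q => M (Matrix.of fun k k' => X (k, p.2) (k', q.2)) p.1 q.1

/-- A conditionally unital bipartite channel: it sends every state of the form
`u_A ⊗ ρ_B` to a state of the form `u_C ⊗ σ_{B'}`. -/
def CondUnital {a b c b' : ℕ}
    (N : Matrix (Fin a × Fin b) (Fin a × Fin b) ℂ → Matrix (Fin c × Fin b') (Fin c × Fin b') ℂ) :
    Prop :=
  ∀ ρB : Matrix (Fin b) (Fin b) ℂ, IsState ρB →
    ∃ σ : Matrix (Fin b') (Fin b') ℂ, IsState σ ∧ N (unif a ⊗ₖ ρB) = unif c ⊗ₖ σ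

/-- An `A ↛ B'` semi-causal bipartite channel. -/
def SemiCausal {a b c b' : ℕ}
    (N : Matrix (Fin a × Fin b) (Fin a × Fin b) ℂ → Matrix (Fin c × Fin b') (Fin c × Fin b') ℂ) :
    Prop :=
  ∀ M : Matrix (Fin a) (Fin a) ℂ → Matrix (Fin a) (Fin a) ℂ, IsChannel M →
    ∀ X : Matrix (Fin a × Fin b) (Fin a × Fin b) ℂ,
      trA (N (tensorIdRight b M X)) = trA (N X)

/-- A locally balanced channel: a quantum channel that is both conditionally unital
and `A ↛ B'` semi-causal. -/
def LocallyBalanced {a b c b' : ℕ}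
    (N : Matrix (Fin a × Fin b) (Fin a × Fin b) ℂ → Matrix (Fin c × Fin b') (Fin c × Fin b') ℂ) :
    Prop :=
  IsChannel N ∧ CondUnital N ∧ SemiCausal N

/-- Conditional majorization `ρ ≻_A σ` with respect to the first system. -/
def CondMaj {a b a' b' : ℕ}
    (ρ : Matrix (Fin a × Fin b) (Fin a × Fin b) ℂ)
    (σ : Matrix (Fin a' × Fin b') (Fin a' × Fin b') ℂ) : Prop :=
  (a' ≥ a ∧ ∃ (V : Matrix (Fin a') (Fin a) ℂ)
      (N : Matrix (Fin a × Fin b) (Fin a × Fin b) ℂ →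
           Matrix (Fin a × Fin b') (Fin a × Fin b') ℂ),
      Vᴴ * V = 1 ∧ LocallyBalanced N ∧
      σ = (V ⊗ₖ (1 : Matrix (Fin b') (Fin b') ℂ)) * N ρ *
            (V ⊗ₖ (1 : Matrix (Fin b') (Fin b') ℂ))ᴴ) ∨
  (a ≥ a' ∧ ∃ (U : Matrix (Fin a) (Fin a') ℂ)
      (N : Matrix (Fin a × Fin b) (Fin a × Fin b) ℂ →
           Matrix (Fin a × Fin b') (Fin a × Fin b') ℂ),
      Uᴴ * U = 1 ∧ LocallyBalanced N ∧
      (U ⊗ₖ (1 : Matrix (Fin b') (Fin b') ℂ)) * σ *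
          (U ⊗ₖ (1 : Matrix (Fin b') (Fin b') ℂ))ᴴ = N ρ)

/-- Relaxed conditional majorization `ρ ≻^A σ`: as `CondMaj`, with the locally
balanced channel replaced by a mere conditionally unital channel. -/
def RelCondMaj {a b a' b' : ℕ}
    (ρ : Matrix (Fin a × Fin b) (Fin a × Fin b) ℂ)
    (σ : Matrix (Fin a' × Fin b') (Fin a' × Fin b') ℂ) : Prop :=
  (a' ≥ a ∧ ∃ (V : Matrix (Fin a') (Fin a) ℂ)
      (N : Matrix (Fin a × Fin b) (Fin a × Fin b) ℂ →
           Matrix (Fin a × Fin b') (Fin a × Fin b') ℂ),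
      Vᴴ * V = 1 ∧ (IsChannel N ∧ CondUnital N) ∧
      σ = (V ⊗ₖ (1 : Matrix (Fin b') (Fin b') ℂ)) * N ρ *
            (V ⊗ₖ (1 : Matrix (Fin b') (Fin b') ℂ))ᴴ) ∨
  (a ≥ a' ∧ ∃ (U : Matrix (Fin a) (Fin a') ℂ)
      (N : Matrix (Fin a × Fin b) (Fin a × Fin b) ℂ →
           Matrix (Fin a × Fin b') (Fin a × Fin b') ℂ),
      Uᴴ * U = 1 ∧ (IsChannel N ∧ CondUnital N) ∧
      (U ⊗ₖ (1 : Matrix (Fin b') (Fin b') ℂ)) * σ *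
          (U ⊗ₖ (1 : Matrix (Fin b') (Fin b') ℂ))ᴴ = N ρ)

/-- Reordering `(A × B) × (A' × B') ≃ AA' × BB'`. -/
def sysEquiv (a b a' b' : ℕ) :
    (Fin a × Fin b) × (Fin a' × Fin b') ≃ Fin (a * a') × Fin (b * b') :=
  (Equiv.prodProdProdComm (Fin a) (Fin b) (Fin a') (Fin b')).trans
    (finProdFinEquiv.prodCongr finProdFinEquiv)

/-- The tensor product `ρ_{AB} ⊗ σ_{A'B'}` regarded as a bipartite state with
first system `AA'` and second system `BB'`. -/
def tensorState {a b a' b' : ℕ}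
    (ρ : Matrix (Fin a × Fin b) (Fin a × Fin b) ℂ)
    (σ : Matrix (Fin a' × Fin b') (Fin a' × Fin b') ℂ) :
    Matrix (Fin (a * a') × Fin (b * b')) (Fin (a * a') × Fin (b * b')) ℂ :=
  Matrix.reindex (sysEquiv a b a' b') (sysEquiv a b a' b') (ρ ⊗ₖ σ)

/-- Reindexing of a matrix on a product of `Fin` types as a matrix on a single `Fin` type. -/
def mreindex {a b : ℕ} (ρ : Matrix (Fin a × Fin b) (Fin a × Fin b) ℂ) :
    Matrix (Fin (a * b)) (Fin (a * b)) ℂ :=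
  Matrix.reindex finProdFinEquiv finProdFinEquiv ρ

/-- Majorization `ρ ≻ σ` between states of possibly different dimensions. -/
def Maj {n n' : ℕ} (ρ : Matrix (Fin n) (Fin n) ℂ) (σ : Matrix (Fin n') (Fin n') ℂ) : Prop :=
  (n' ≥ n ∧ ∃ (V : Matrix (Fin n') (Fin n) ℂ)
      (N : Matrix (Fin n) (Fin n) ℂ → Matrix (Fin n) (Fin n) ℂ),
      Vᴴ * V = 1 ∧ IsChannel N ∧ N 1 = 1 ∧ σ = V * N ρ * Vᴴ) ∨
  (n ≥ n' ∧ ∃ (U : Matrix (Fin n) (Fin n') ℂ)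
      (N : Matrix (Fin n) (Fin n) ℂ → Matrix (Fin n) (Fin n) ℂ),
      Uᴴ * U = 1 ∧ IsChannel N ∧ N 1 = 1 ∧ U * σ * Uᴴ = N ρ)

/-- The conditional min-entropy
`H_min(A|B)_ρ = - log₂ min {λ ≥ 0 : λ I_A ⊗ ρ_B - ρ_{AB} ≽ 0}`. -/
def condMinEntropy {a b : ℕ} (ρ : Matrix (Fin a × Fin b) (Fin a × Fin b) ℂ) : ℝ :=
  - Real.logb 2 (sInf {l : ℝ | 0 ≤ l ∧
      (l • ((1 : Matrix (Fin a) (Fin a) ℂ) ⊗ₖ trA ρ) - ρ).PosSemidef})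

/-- The conditional min-entropy `H_min^↑(A|B)_ρ`, optimized over states `σ_B`. -/
def condMinEntropyUp {a b : ℕ} (ρ : Matrix (Fin a × Fin b) (Fin a × Fin b) ℂ) : ℝ :=
  sSup {r : ℝ | ∃ σ : Matrix (Fin b) (Fin b) ℂ, IsState σ ∧
    (∃ l : ℝ, 0 ≤ l ∧ (l • ((1 : Matrix (Fin a) (Fin a) ℂ) ⊗ₖ σ) - ρ).PosSemidef) ∧
    r = - Real.logb 2 (sInf {l : ℝ | 0 ≤ l ∧
      (l • ((1 : Matrix (Fin a) (Fin a) ℂ) ⊗ₖ σ) - ρ).PosSemidef})}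

/-- The maximally entangled state of rank `k` on `ℂ^k ⊗ ℂ^k`. -/
def maxEnt (k : ℕ) : Matrix (Fin k × Fin k) (Fin k × Fin k) ℂ :=
  Matrix.of fun p q => if p.1 = p.2 ∧ q.1 = q.2 then (k : ℂ)⁻¹ else 0

/-- The quantum channel on `m × m` matrices induced by a doubly stochastic matrix `D`,
`ρ ↦ ∑ x x', D x' x * ρ x x • E x' x'`. -/
def dsChannel {m : ℕ} (D : Matrix (Fin m) (Fin m) ℝ) :
    Matrix (Fin m) (Fin m) ℂ → Matrix (Fin m) (Fin m) ℂ :=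
  fun ρ => ∑ x : Fin m, ∑ x' : Fin m,
    (((D x' x : ℝ) : ℂ) * ρ x x) • Matrix.single x' x' (1 : ℂ)

/-- A doubly stochastic matrix: nonnegative entries, all row and column sums equal one. -/
def IsDoublyStochastic {m : ℕ} (D : Matrix (Fin m) (Fin m) ℝ) : Prop :=
  (∀ x x', 0 ≤ D x x') ∧ (∀ x, ∑ x', D x x' = 1) ∧ (∀ x', ∑ x, D x x' = 1)

/-- The tensor product `M ⊗ F` of two (linear) maps between matrix algebras. -/
def tensorMap {m m' n n' : ℕ}
    (M : Matrix (Fin m) (Fin m) ℂ → Matrix (Fin m') (Fin m') ℂ)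
    (F : Matrix (Fin n) (Fin n) ℂ → Matrix (Fin n') (Fin n') ℂ) :
    Matrix (Fin m × Fin n) (Fin m × Fin n) ℂ →
      Matrix (Fin m' × Fin n') (Fin m' × Fin n') ℂ :=
  fun X => ∑ k : Fin m, ∑ k' : Fin m, ∑ l : Fin n, ∑ l' : Fin n,
    X (k, l) (k', l') •
      (M (Matrix.single k k' 1) ⊗ₖ F (Matrix.single l l' 1))

/-- A conditional entropy: a real-valued function on all bipartite states of all finite
dimensions that is not identically zero, reverses conditional majorization, and is
additive on tensor products. -/
structure CondEntropy where
  H : ∀ (a b : ℕ), Matrix (Fin a × Fin b) (Fin a × Fin b) ℂ → ℝ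
  nontrivial : ∃ (a b : ℕ) (ρ : Matrix (Fin a × Fin b) (Fin a × Fin b) ℂ),
    IsState ρ ∧ H a b ρ ≠ 0
  mono : ∀ (a b a' b' : ℕ) (ρ : Matrix (Fin a × Fin b) (Fin a × Fin b) ℂ)
    (σ : Matrix (Fin a' × Fin b') (Fin a' × Fin b') ℂ),
    IsState ρ → IsState σ → CondMaj ρ σ → H a b ρ ≤ H a' b' σ
  additive : ∀ (a b a' b' : ℕ) (ρ : Matrix (Fin a × Fin b) (Fin a × Fin b) ℂ)
    (σ : Matrix (Fin a' × Fin b') (Fin a' × Fin b') ℂ),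
    IsState ρ → IsState σ →
    H (a * a') (b * b') (tensorState ρ σ) = H a b ρ + H a' b' σ

/-- A conditional entropy is normalized if `H(A|B) = 1` on `u⁽²⁾ ⊗ ρ_B`. -/
def CondEntropy.Normalized (E : CondEntropy) : Prop :=
  ∀ (b : ℕ) (ρB : Matrix (Fin b) (Fin b) ℂ), IsState ρB →
    E.H 2 b (unif 2 ⊗ₖ ρB) = 1

/-- A relaxed conditional entropy: as `CondEntropy`, but monotone under the relaxed
conditional majorization. -/
structure RelCondEntropy where
  H : ∀ (a b : ℕ), Matrix (Fin a × Fin b) (Fin a × Fin b) ℂ → ℝ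
  nontrivial : ∃ (a b : ℕ) (ρ : Matrix (Fin a × Fin b) (Fin a × Fin b) ℂ),
    IsState ρ ∧ H a b ρ ≠ 0
  mono : ∀ (a b a' b' : ℕ) (ρ : Matrix (Fin a × Fin b) (Fin a × Fin b) ℂ)
    (σ : Matrix (Fin a' × Fin b') (Fin a' × Fin b') ℂ),
    IsState ρ → IsState σ → RelCondMaj ρ σ → H a b ρ ≤ H a' b' σ
  additive : ∀ (a b a' b' : ℕ) (ρ : Matrix (Fin a × Fin b) (Fin a × Fin b) ℂ)
    (σ : Matrix (Fin a' × Fin b') (Fin a' × Fin b') ℂ),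
    IsState ρ → IsState σ →
    H (a * a') (b * b') (tensorState ρ σ) = H a b ρ + H a' b' σ

/-- A relaxed conditional entropy is normalized if `H(A|B) = 1` on `u⁽²⁾ ⊗ ρ_B`. -/
def RelCondEntropy.Normalized (E : RelCondEntropy) : Prop :=
  ∀ (b : ℕ) (ρB : Matrix (Fin b) (Fin b) ℂ), IsState ρB →
    E.H 2 b (unif 2 ⊗ₖ ρB) = 1

/-- An entropy: a real-valued function on all states of all finite dimensions that is
not identically zero, reverses majorization, and is additive on tensor products. -/
structure Entropy where
  H : ∀ (n : ℕ), Matrix (Fin n) (Fin n) ℂ → ℝ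
  nontrivial : ∃ (n : ℕ) (ρ : Matrix (Fin n) (Fin n) ℂ), IsState ρ ∧ H n ρ ≠ 0
  mono : ∀ (n n' : ℕ) (ρ : Matrix (Fin n) (Fin n) ℂ) (σ : Matrix (Fin n') (Fin n') ℂ),
    IsState ρ → IsState σ → Maj ρ σ → H n ρ ≤ H n' σ
  additive : ∀ (n n' : ℕ) (ρ : Matrix (Fin n) (Fin n) ℂ) (σ : Matrix (Fin n') (Fin n') ℂ),
    IsState ρ → IsState σ → H (n * n') (mreindex (ρ ⊗ₖ σ)) = H n ρ + H n' σ

/-- A relative entropy: an `[0,∞]`-valued function on pairs of states of equal dimension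
that is not identically zero, monotone under quantum channels, and additive on
tensor products. -/
structure RelEntropy where
  D : ∀ (n : ℕ), Matrix (Fin n) (Fin n) ℂ → Matrix (Fin n) (Fin n) ℂ → ℝ≥0∞
  nontrivial : ∃ (n : ℕ) (ρ σ : Matrix (Fin n) (Fin n) ℂ),
    IsState ρ ∧ IsState σ ∧ D n ρ σ ≠ 0
  mono : ∀ (n m : ℕ) (N : Matrix (Fin n) (Fin n) ℂ → Matrix (Fin m) (Fin m) ℂ),
    IsChannel N → ∀ ρ σ : Matrix (Fin n) (Fin n) ℂ,
      IsState ρ → IsState σ → D m (N ρ) (N σ) ≤ D n ρ σ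
  additive : ∀ (n m : ℕ) (ρ σ : Matrix (Fin n) (Fin n) ℂ) (ω τ : Matrix (Fin m) (Fin m) ℂ),
    IsState ρ → IsState σ → IsState ω → IsState τ →
    D (n * m) (mreindex (ρ ⊗ₖ ω)) (mreindex (σ ⊗ₖ τ)) = D n ρ σ + D m ω τ


/-- The conditional entropy `log₂|A| − 𝐃(ρ_{AB} ‖ u_A ⊗ ρ_B)` induced by a relative
entropy `𝐃`, valued in the extended reals. -/
def RelEntropy.condH (Dd : RelEntropy) (a b : ℕ)
    (ρ : Matrix (Fin a × Fin b) (Fin a × Fin b) ℂ) : EReal :=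
  ((Real.logb 2 a : ℝ) : EReal) -
    ((Dd.D (a * b) (mreindex ρ) (mreindex (unif a ⊗ₖ trA ρ)) : ℝ≥0∞) : EReal)

/-!
States with a trivial first system all conditionally majorize one another (a replacement
channel is locally balanced when `|A| = 1`), so `𝐇` is constant on them, and additivity,
`𝐇(ρ ⊗ ρ) = 2 𝐇(ρ)`, forces the constant to be `0`.

Write `ω = diag p` for the classical mixing state. An isometric embedding of the first system
gives `u₁ ⊗ ω ≻_A |i⟩⟨i| ⊗ ω`. Then `|i⟩⟨i| ⊗ ω ≻_A ρ` through the measure-and-prepare channel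
that reads `(k, x)` off `A` and the classical register and prepares `Λₖₓ ⊗ τₓ`, where
`Λᵢₓ = σₓ` and `Λₖₓ = (1 - σₓ) / (|A| - 1)` for `k ≠ i`. Since `∑ₖ Λₖₓ = 1` the channel is
conditionally unital, and since its output marginal on `B` only depends on `x` it is semi-causal.
Monotonicity along `u₁ ⊗ ω ≻_A |i⟩⟨i| ⊗ ω ≻_A ρ` gives `0 = 𝐇(u₁ ⊗ ω) ≤ 𝐇(A|B)_ρ`.
-/

lemma sum_kronecker {ι α β γ δ : Type} (s : Finset ι) (A : ι → Matrix α β ℂ)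
    (B : Matrix γ δ ℂ) : (∑ i ∈ s, A i) ⊗ₖ B = ∑ i ∈ s, A i ⊗ₖ B := by
  ext
  simp [Matrix.sum_apply, Finset.sum_mul]

lemma kronecker_sum {ι α β γ δ : Type} (s : Finset ι) (A : Matrix α β ℂ)
    (B : ι → Matrix γ δ ℂ) : A ⊗ₖ (∑ i ∈ s, B i) = ∑ i ∈ s, A ⊗ₖ B i := by
  ext
  simp [Matrix.sum_apply, Finset.mul_sum]

section States

variable {α β : Type} [Fintype α] [Fintype β]

lemma IsState.nonempty {ρ : Matrix α α ℂ} (hρ : IsState ρ) : Nonempty α := by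
  by_contra h
  rw [not_nonempty_iff] at h
  simpa [Matrix.trace] using hρ.2

lemma IsState.kronecker {ρ : Matrix α α ℂ} {σ : Matrix β β ℂ} (hρ : IsState ρ)
    (hσ : IsState σ) : IsState (ρ ⊗ₖ σ) :=
  ⟨hρ.1.kronecker hσ.1, by rw [trace_kronecker, hρ.2, hσ.2, mul_one]⟩

lemma IsState.tensorState {a b a' b' : ℕ} {ρ : Matrix (Fin a × Fin b) (Fin a × Fin b) ℂ}
    {σ : Matrix (Fin a' × Fin b') (Fin a' × Fin b') ℂ} (hρ : IsState ρ) (hσ : IsState σ) :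
    IsState (tensorState ρ σ) := by
  refine ⟨(hρ.kronecker hσ).1.submatrix _, ?_⟩
  rw [_root_.tensorState, reindex_apply, ← (hρ.kronecker hσ).2]
  exact Equiv.sum_comp (sysEquiv a b a' b').symm fun i => (ρ ⊗ₖ σ) i i

lemma isState_sum_smul {ι : Type} [Fintype ι] {ρ : ι → Matrix α α ℂ}
    (hρ : ∀ i, IsState (ρ i)) {p : ι → ℝ} (hp : ∀ i, 0 ≤ p i) (hp1 : ∑ i, p i = 1) :
    IsState (∑ i, p i • ρ i) := by
  refine ⟨posSemidef_sum _ fun i _ => (hρ i).1.smul (hp i), ?_⟩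
  simp only [trace_sum, trace_smul, fun i => (hρ i).2, Complex.real_smul, mul_one]
  exact_mod_cast hp1

lemma isState_diagonal [DecidableEq α] {p : α → ℝ} (hp : ∀ i, 0 ≤ p i) (hp1 : ∑ i, p i = 1) :
    IsState (diagonal fun i => (p i : ℂ)) :=
  ⟨PosSemidef.diagonal fun i => Complex.zero_le_real.mpr (hp i), by
    rw [trace_diagonal]; exact_mod_cast hp1⟩

lemma isState_single [DecidableEq α] (i : α) : IsState (single i i (1 : ℂ)) := by
  rw [← diagonal_single]
  exact ⟨PosSemidef.diagonal (Pi.single_nonneg.mpr zero_le_one), by simp⟩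

lemma isState_unif {n : ℕ} (hn : n ≠ 0) : IsState (unif n) :=
  ⟨PosSemidef.one.smul (inv_nonneg.mpr (Nat.cast_nonneg' n)), by simp [unif, hn]⟩

lemma unif_one : unif 1 = 1 := by simp [unif]

open scoped MatrixOrder in
lemma IsState.posSemidef_one_sub [DecidableEq α] {σ : Matrix α α ℂ} (hσ : IsState σ) :
    (1 - σ).PosSemidef := by
  have hH := hσ.1.isHermitian
  have hsum : ∑ i, hH.eigenvalues i = 1 := by
    have := hH.trace_eq_sum_eigenvalues
    rw [hσ.2] at this
    apply Complex.ofReal_injective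
    simpa using this.symm
  have : σ ≤ algebraMap ℝ (Matrix α α ℂ) 1 := by
    refine le_algebraMap_of_spectrum_le (fun r hr => ?_) hH.isSelfAdjoint
    rw [hH.spectrum_real_eq_range_eigenvalues] at hr
    obtain ⟨i, rfl⟩ := hr
    rw [← hsum]
    exact Finset.single_le_sum (fun j _ => hσ.1.eigenvalues_nonneg j) (Finset.mem_univ i)
  simpa [Matrix.le_iff] using this

end States

section Channels

variable {α β : Type} [Fintype α]

def measurePrepare (ω : α → Matrix β β ℂ) (X : Matrix α α ℂ) : Matrix β β ℂ :=
  ∑ i, X i i • ω i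

lemma measurePrepare_single [DecidableEq α] (ω : α → Matrix β β ℂ) (i j : α) :
    measurePrepare ω (single i j 1) = if i = j then ω i else 0 := by
  simp [measurePrepare, single_apply, ite_and, eq_comm]

lemma measurePrepare_const (σ : Matrix β β ℂ) (X : Matrix α α ℂ) :
    measurePrepare (fun _ => σ) X = X.trace • σ :=
  (Finset.sum_smul ..).symm

lemma measurePrepare_kronecker {ι γ : Type} [Fintype ι]
    (Λ : α × ι → Matrix γ γ ℂ) (τ : ι → Matrix β β ℂ) (A : Matrix α α ℂ) (B : Matrix ι ι ℂ) :
    measurePrepare (fun q => Λ q ⊗ₖ τ q.2) (A ⊗ₖ B) =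
      ∑ x, B x x • (measurePrepare (fun k => Λ (k, x)) A ⊗ₖ τ x) := by
  rw [measurePrepare, Fintype.sum_prod_type, Finset.sum_comm]
  refine Finset.sum_congr rfl fun x _ => ?_
  simp only [measurePrepare, sum_kronecker, Finset.smul_sum, smul_kronecker, smul_smul,
    kronecker_apply, mul_comm]

variable [Fintype β]

lemma trace_measurePrepare {ω : α → Matrix β β ℂ} (hω : ∀ i, IsState (ω i))
    (X : Matrix α α ℂ) : (measurePrepare ω X).trace = X.trace := by
  simp only [measurePrepare, trace_sum, trace_smul, fun i => (hω i).2, smul_eq_mul, mul_one]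
  rfl

lemma isChannel_measurePrepare [DecidableEq α] {ω : α → Matrix β β ℂ}
    (hω : ∀ i, IsState (ω i)) : IsChannel (measurePrepare ω) := by
  refine ⟨⟨fun X Y => ?_, fun c X => ?_⟩, trace_measurePrepare hω, ?_⟩
  · simp [measurePrepare, add_smul, Finset.sum_add_distrib]
  · simp [measurePrepare, mul_smul, Finset.smul_sum]
  · have : choiMatrix (measurePrepare ω) = ∑ i, single i i 1 ⊗ₖ ω i := by
      simp [choiMatrix, measurePrepare_single, apply_ite, Finset.sum_ite_eq]
    rw [this]
    exact posSemidef_sum _ fun i _ => (isState_single i).1.kronecker (hω i).1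

lemma IsState.measurePrepare {ω : α → Matrix β β ℂ} (hω : ∀ i, IsState (ω i))
    {ρ : Matrix α α ℂ} (hρ : IsState ρ) : IsState (measurePrepare ω ρ) :=
  ⟨posSemidef_sum _ fun i _ => (hω i).1.smul hρ.1.diag_nonneg,
    (trace_measurePrepare hω ρ).trans hρ.2⟩

lemma isChannel_id [DecidableEq α] : IsChannel (id : Matrix α α ℂ → Matrix α α ℂ) := by
  refine ⟨LinearMap.id.isLinear, fun X => rfl, ?_⟩
  have : choiMatrix (id : Matrix α α ℂ → Matrix α α ℂ) =
      vecMulVec (fun p => if p.1 = p.2 then 1 else 0) (star fun p => if p.1 = p.2 then 1 else 0) := by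
    ext ⟨i, k⟩ ⟨j, l⟩
    simp [choiMatrix, Matrix.sum_apply, single_apply, vecMulVec_apply, ite_and, eq_comm]
    split_ifs <;> rfl
  rw [this]
  exact posSemidef_vecMulVec_self_star _

end Channels

section PartialTrace

variable {α β : Type} [Fintype α]

lemma trace_trA [Fintype β] (X : Matrix (α × β) (α × β) ℂ) : (trA X).trace = X.trace := by
  rw [trace, trace, Fintype.sum_prod_type, Finset.sum_comm]
  rfl

lemma trA_tensorIdRight {a a' : ℕ} (b : ℕ)
    {M : Matrix (Fin a) (Fin a) ℂ → Matrix (Fin a') (Fin a') ℂ} (hM : IsChannel M)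
    (X : Matrix (Fin a × Fin b) (Fin a × Fin b) ℂ) : trA (tensorIdRight b M X) = trA X := by
  ext j j'
  exact hM.2.1 (of fun k k' => X (k, j) (k', j'))

lemma trA_measurePrepare_kronecker {ι γ : Type} [Fintype ι] [Fintype γ]
    {Λ : α × ι → Matrix γ γ ℂ} (hΛ : ∀ q, (Λ q).trace = 1) (τ : ι → Matrix β β ℂ)
    (X : Matrix (α × ι) (α × ι) ℂ) :
    trA (measurePrepare (fun q => Λ q ⊗ₖ τ q.2) X) = measurePrepare τ (trA X) := by
  ext j j'
  simp only [trA, measurePrepare, of_apply, Matrix.sum_apply, Matrix.smul_apply, kronecker_apply,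
    smul_eq_mul]
  have hΛ' : ∀ q, ∑ i, Λ q i i = 1 := hΛ
  rw [Finset.sum_comm]
  simp_rw [← Finset.mul_sum, ← Finset.sum_mul, hΛ', one_mul, Fintype.sum_prod_type,
    Finset.sum_mul]
  exact Finset.sum_comm

end PartialTrace

section LocallyBalanced

variable {a b c b' : ℕ}

lemma semiCausal_of_trA
    {N : Matrix (Fin a × Fin b) (Fin a × Fin b) ℂ → Matrix (Fin c × Fin b') (Fin c × Fin b') ℂ}
    (h : ∀ X Y, trA X = trA Y → trA (N X) = trA (N Y)) : SemiCausal N :=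
  fun _ hM X => h _ _ (trA_tensorIdRight b hM X)

lemma locallyBalanced_id :
    LocallyBalanced (id : Matrix (Fin a × Fin b) (Fin a × Fin b) ℂ → _) :=
  ⟨isChannel_id, fun ρB hρB => ⟨ρB, hρB, rfl⟩, semiCausal_of_trA fun _ _ h => h⟩

lemma CondMaj.of_locallyBalanced
    {N : Matrix (Fin a × Fin b) (Fin a × Fin b) ℂ → Matrix (Fin a × Fin b') (Fin a × Fin b') ℂ}
    (hN : LocallyBalanced N) (ρ : Matrix (Fin a × Fin b) (Fin a × Fin b) ℂ) :
    CondMaj ρ (N ρ) :=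
  Or.inl ⟨le_rfl, 1, N, by simp, hN, by simp⟩

lemma CondMaj.of_isometry {a' : ℕ} {V : Matrix (Fin a') (Fin a) ℂ} (hV : Vᴴ * V = 1)
    (h : a ≤ a') (ρ : Matrix (Fin a × Fin b) (Fin a × Fin b) ℂ) :
    CondMaj ρ ((V ⊗ₖ (1 : Matrix (Fin b) (Fin b) ℂ)) * ρ * (V ⊗ₖ 1)ᴴ) :=
  Or.inl ⟨h, V, id, hV, locallyBalanced_id, rfl⟩

end LocallyBalanced

section TrivialSystem

lemma unif_one_kronecker_submatrix {β : Type} (σ : Matrix (Fin 1 × β) (Fin 1 × β) ℂ) :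
    unif 1 ⊗ₖ σ.submatrix (Prod.mk 0) (Prod.mk 0) = σ := by
  ext ⟨i, j⟩ ⟨i', j'⟩
  simp [unif_one, Subsingleton.elim i 0, Subsingleton.elim i' 0]

lemma IsState.submatrix_prodMk_zero {β : Type} [Fintype β]
    {σ : Matrix (Fin 1 × β) (Fin 1 × β) ℂ} (hσ : IsState σ) :
    IsState (σ.submatrix (Prod.mk 0) (Prod.mk 0)) :=
  ⟨hσ.1.submatrix _, by rw [← hσ.2]; simp [trace, Fintype.sum_prod_type]⟩

lemma condMaj_of_fin_one {n n' : ℕ} {ρ : Matrix (Fin 1 × Fin n) (Fin 1 × Fin n) ℂ}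
    {σ : Matrix (Fin 1 × Fin n') (Fin 1 × Fin n') ℂ} (hρ : IsState ρ) (hσ : IsState σ) :
    CondMaj ρ σ := by
  have hN : LocallyBalanced (measurePrepare fun _ : Fin 1 × Fin n => σ) := by
    refine ⟨isChannel_measurePrepare fun _ => hσ, fun ρB hρB => ?_,
      semiCausal_of_trA fun X Y h => ?_⟩
    · refine ⟨_, hσ.submatrix_prodMk_zero, ?_⟩
      rw [measurePrepare_const, ((isState_unif one_ne_zero).kronecker hρB).2, one_smul,
        unif_one_kronecker_submatrix]
    · rw [measurePrepare_const, measurePrepare_const, ← trace_trA X, ← trace_trA Y, h]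
  simpa [measurePrepare_const, hρ.2] using CondMaj.of_locallyBalanced hN ρ

lemma CondEntropy.H_eq_zero_of_fin_one (E : CondEntropy) {n : ℕ}
    {ρ : Matrix (Fin 1 × Fin n) (Fin 1 × Fin n) ℂ} (hρ : IsState ρ) : E.H 1 n ρ = 0 := by
  have hρρ := hρ.tensorState hρ
  have hadd := E.additive 1 n 1 n ρ ρ hρ hρ
  have hle := E.mono 1 (n * n) 1 n _ _ hρρ hρ (condMaj_of_fin_one hρρ hρ)
  have hge := E.mono 1 n 1 (n * n) _ _ hρ hρρ (condMaj_of_fin_one hρ hρρ)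
  linarith

lemma condMaj_unif_one_kronecker {a n : ℕ} (i : Fin a) (ω : Matrix (Fin n) (Fin n) ℂ) :
    CondMaj (unif 1 ⊗ₖ ω) (single i i 1 ⊗ₖ ω) := by
  have hV : (single i (0 : Fin 1) (1 : ℂ))ᴴ * single i (0 : Fin 1) (1 : ℂ) = 1 := by
    ext j j'
    simp [Subsingleton.elim j 0, Subsingleton.elim j' 0, one_apply]
  have h : (single i (0 : Fin 1) (1 : ℂ) ⊗ₖ (1 : Matrix (Fin n) (Fin n) ℂ)) * (unif 1 ⊗ₖ ω) *
      (single i (0 : Fin 1) (1 : ℂ) ⊗ₖ (1 : Matrix (Fin n) (Fin n) ℂ))ᴴ = single i i 1 ⊗ₖ ω := by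
    rw [conjTranspose_kronecker, conjTranspose_one, ← mul_kronecker_mul, ← mul_kronecker_mul,
      unif_one]
    simp
  exact h ▸ CondMaj.of_isometry hV i.pos (unif 1 ⊗ₖ ω)

end TrivialSystem

section SeparableStates

variable {α : Type} [Fintype α] [DecidableEq α]

lemma IsState.exists_unital_family {σ : Matrix α α ℂ} (hσ : IsState σ) (i₀ : α) :
    ∃ Λ : α → Matrix α α ℂ, (∀ k, IsState (Λ k)) ∧ Λ i₀ = σ ∧ ∑ k, Λ k = 1 := by
  rcases subsingleton_or_nontrivial α with hα | hα
  · refine ⟨fun _ => σ, fun _ => hσ, rfl, ?_⟩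
    have : σ i₀ i₀ = 1 := by simpa [trace, Fintype.sum_subsingleton _ i₀] using hσ.2
    ext i j
    rw [Fintype.sum_subsingleton _ i₀, Subsingleton.elim i i₀, Subsingleton.elim j i₀, this,
      one_apply_eq]
  · set c : ℝ := Fintype.card α - 1
    have hc : 0 < c := sub_pos.mpr (by exact_mod_cast Fintype.one_lt_card)
    refine ⟨fun k => if k = i₀ then σ else c⁻¹ • (1 - σ), fun k => ?_, if_pos rfl, ?_⟩
    · dsimp only
      split_ifs
      · exact hσ
      · refine ⟨hσ.posSemidef_one_sub.smul (inv_nonneg.mpr hc.le), ?_⟩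
        rw [trace_smul, trace_sub, trace_one, hσ.2, Complex.real_smul]
        have hcC : (Fintype.card α : ℂ) - 1 = c := by simp [c]
        rw [hcC, Complex.ofReal_inv, inv_mul_cancel₀ (by exact_mod_cast hc.ne')]
    · rw [← Finset.add_sum_erase _ _ (Finset.mem_univ i₀), if_pos rfl,
        Finset.sum_congr rfl fun k hk => if_neg (Finset.ne_of_mem_erase hk), Finset.sum_const,
        Finset.card_erase_of_mem (Finset.mem_univ _), Finset.card_univ,
        ← Nat.cast_smul_eq_nsmul ℝ, smul_smul, Nat.cast_pred Fintype.card_pos,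
        mul_inv_cancel₀ hc.ne', one_smul, add_sub_cancel]

end SeparableStates

lemma locallyBalanced_measurePrepare_kronecker {a b N : ℕ}
    {Λ : Fin a × Fin N → Matrix (Fin a) (Fin a) ℂ} (hΛ : ∀ q, IsState (Λ q))
    (hΛ1 : ∀ x, ∑ k, Λ (k, x) = 1)
    {τ : Fin N → Matrix (Fin b) (Fin b) ℂ} (hτ : ∀ x, IsState (τ x)) :
    LocallyBalanced (measurePrepare fun q => Λ q ⊗ₖ τ q.2) := by
  refine ⟨isChannel_measurePrepare fun q => (hΛ q).kronecker (hτ q.2), fun ρB hρB => ?_,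
    semiCausal_of_trA fun X Y h => ?_⟩
  · refine ⟨measurePrepare τ ρB, hρB.measurePrepare hτ, ?_⟩
    have hunif : ∀ x, measurePrepare (fun k => Λ (k, x)) (unif a) = unif a := fun x => by
      simp [measurePrepare, unif, ← Finset.smul_sum, hΛ1 x]
    simp only [measurePrepare_kronecker, hunif]
    rw [measurePrepare, kronecker_sum]
    simp only [kronecker_smul]
  · rw [trA_measurePrepare_kronecker (fun q => (hΛ q).2), trA_measurePrepare_kronecker
      (fun q => (hΛ q).2), h]

lemma condMaj_single_kronecker_diagonal {a b N : ℕ} (i : Fin a) (p : Fin N → ℝ)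
    {σ : Fin N → Matrix (Fin a) (Fin a) ℂ} {τ : Fin N → Matrix (Fin b) (Fin b) ℂ}
    (hσ : ∀ x, IsState (σ x)) (hτ : ∀ x, IsState (τ x)) :
    CondMaj (single i i 1 ⊗ₖ diagonal fun x => (p x : ℂ)) (∑ x, p x • (σ x ⊗ₖ τ x)) := by
  choose Λ hΛ hΛi hΛ1 using fun x => (hσ x).exists_unital_family i
  convert CondMaj.of_locallyBalanced (locallyBalanced_measurePrepare_kronecker
    (Λ := fun q => Λ q.2 q.1) (fun q => hΛ q.2 q.1) hΛ1 hτ) _ using 1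
  simp [measurePrepare_kronecker, measurePrepare_single, hΛi, Complex.coe_smul]

theorem condEntropy_nonneg_of_separable_general (E : CondEntropy)
    (a b N : ℕ) (p : Fin N → ℝ) (hp : ∀ x, 0 ≤ p x) (hp1 : ∑ x, p x = 1)
    (σ : Fin N → Matrix (Fin a) (Fin a) ℂ) (τ : Fin N → Matrix (Fin b) (Fin b) ℂ)
    (hσ : ∀ x, IsState (σ x)) (hτ : ∀ x, IsState (τ x))
    (ρ : Matrix (Fin a × Fin b) (Fin a × Fin b) ℂ)
    (hρ : ρ = ∑ x, p x • (σ x ⊗ₖ τ x)) :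
    0 ≤ E.H a b ρ := by
  have hρs : IsState ρ := hρ ▸ isState_sum_smul (fun x => (hσ x).kronecker (hτ x)) hp hp1
  obtain ⟨i, -⟩ := hρs.nonempty
  have hω := isState_diagonal hp hp1
  have hω₀ := (isState_unif one_ne_zero).kronecker hω
  have hω₁ := (isState_single i).kronecker hω
  calc 0 = E.H 1 N (unif 1 ⊗ₖ diagonal fun x => (p x : ℂ)) :=
        (E.H_eq_zero_of_fin_one hω₀).symm
    _ ≤ E.H a N (single i i 1 ⊗ₖ diagonal fun x => (p x : ℂ)) :=
        E.mono _ _ _ _ _ _ hω₀ hω₁ (condMaj_unif_one_kronecker i _)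
    _ ≤ E.H a b ρ :=
        E.mono _ _ _ _ _ _ hω₁ hρs (hρ ▸ condMaj_single_kronecker_diagonal i p hσ hτ)

/-- Every normalized conditional entropy is non-negative on separable states. -/
theorem condEntropy_nonneg_of_separable (E : CondEntropy) (hE : E.Normalized)
    (a b N : ℕ) (p : Fin N → ℝ) (hp : ∀ x, 0 ≤ p x) (hp1 : ∑ x, p x = 1)
    (σ : Fin N → Matrix (Fin a) (Fin a) ℂ) (τ : Fin N → Matrix (Fin b) (Fin b) ℂ)
    (hσ : ∀ x, IsState (σ x)) (hτ : ∀ x, IsState (τ x))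
    (ρ : Matrix (Fin a × Fin b) (Fin a × Fin b) ℂ)
    (hρ : ρ = ∑ x, p x • (σ x ⊗ₖ τ x)) :
    0 ≤ E.H a b ρ :=
  condEntropy_nonneg_of_separable_general E a b N p hp hp1 σ τ hσ hτ ρ hρ
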